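/- arXiv:1304.2172 — 4 statements merged into one kernel-verified Lean document; each statement's English description precedes it below -/
import Mathlib

section
/- For probability mass functions P and Q on a finite alphabet 𝒳 and a constant c > 0, define U = P/(1+c) + cQ/(1+c) and the generalized log-likelihood function h_c(P,Q) = D(P‖U) + c·D(Q‖U). Then h_c(P,Q) = D(P‖Q) − (1+c)·D(U‖Q). -/
open Finset Filter Topology
open scoped Classical

/-- Kullback-Leibler divergence (base-2 logarithm) on a finite alphabet. -/
noncomputable def klDiv {X : Type*} [Fintype X] (P Q : X → ℝ) : ℝ :=
  ∑ a, P a * Real.logb 2 (P a / Q a)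

/-- `P` is a probability mass function on the finite alphabet `X`. -/
def IsPmf {X : Type*} [Fintype X] (P : X → ℝ) : Prop :=
  (∀ a, 0 ≤ P a) ∧ ∑ a, P a = 1

/-- Empirical pmf (type) of a sequence. -/
noncomputable def empPmf {X : Type*} [Fintype X] [DecidableEq X] {n : ℕ}
    (x : Fin n → X) (a : X) : ℝ :=
  ((Finset.univ.filter (fun i => x i = a)).card : ℝ) / n

/-- The mixture `U = P/(1+c) + cQ/(1+c)`. -/
noncomputable def mixPmf {X : Type*} (c : ℝ) (P Q : X → ℝ) : X → ℝ :=
  fun a => P a / (1 + c) + c * Q a / (1 + c)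

/-- Generalized log-likelihood ratio function `h_c`. -/
noncomputable def hGen {X : Type*} [Fintype X] (c : ℝ) (P Q : X → ℝ) : ℝ :=
  klDiv P (mixPmf c P Q) + c * klDiv Q (mixPmf c P Q)

/-- Shannon entropy (base 2). -/
noncomputable def shannonEntropy {X : Type*} [Fintype X] (P : X → ℝ) : ℝ :=
  -∑ a, P a * Real.logb 2 (P a)

/-! Since `(1 + c) U = P + c Q`, splitting `log (P / U) = log (P / Q) + log (Q / U)` makes the
identity hold term by term. -/

theorem mul_logb_div_eq_add_mul_logb_div (b : ℝ) {p q u : ℝ} (hq : q ≠ 0) (hu : u ≠ 0) :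
    p * Real.logb b (p / u) = p * Real.logb b (p / q) + p * Real.logb b (q / u) := by
  rcases eq_or_ne p 0 with rfl | hp
  · simp
  · rw [← mul_add, ← Real.logb_mul (div_ne_zero hp hq) (div_ne_zero hq hu),
      div_mul_div_cancel₀ hq]

theorem mul_logb_div_add_mul_mul_logb_div (b : ℝ) {c p q u : ℝ} (hq : q ≠ 0) (hu : u ≠ 0)
    (hmix : (1 + c) * u = p + c * q) :
    p * Real.logb b (p / u) + c * (q * Real.logb b (q / u)) =
      p * Real.logb b (p / q) - (1 + c) * (u * Real.logb b (u / q)) := by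
  have hinv : Real.logb b (u / q) = -Real.logb b (q / u) := by
    rw [← Real.logb_inv, inv_div]
  rw [mul_logb_div_eq_add_mul_logb_div b hq hu, hinv]
  linear_combination -Real.logb b (q / u) * hmix

theorem klDiv_add_mul_klDiv_of_mix {X : Type*} [Fintype X] {c : ℝ} {P Q U : X → ℝ}
    (hQ : ∀ a, Q a ≠ 0) (hU : ∀ a, U a ≠ 0) (hmix : ∀ a, (1 + c) * U a = P a + c * Q a) :
    klDiv P U + c * klDiv Q U = klDiv P Q - (1 + c) * klDiv U Q := by
  simp only [klDiv, mul_sum, ← sum_add_distrib, ← sum_sub_distrib]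
  exact sum_congr rfl fun a _ => mul_logb_div_add_mul_mul_logb_div 2 (hQ a) (hU a) (hmix a)

theorem one_add_mul_mixPmf {X : Type*} {c : ℝ} (hc : 1 + c ≠ 0) (P Q : X → ℝ) (a : X) :
    (1 + c) * mixPmf c P Q a = P a + c * Q a := by
  rw [mixPmf, ← add_div, mul_div_cancel₀ _ hc]

theorem mixPmf_pos {X : Type*} {c : ℝ} (hc : 0 < c) {P Q : X → ℝ} {a : X} (hP : 0 ≤ P a)
    (hQ : 0 < Q a) : 0 < mixPmf c P Q a := by
  unfold mixPmf
  positivity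

theorem stmt2_general {X : Type*} [Fintype X] (c : ℝ) (hc : 0 < c)
    (P Q : X → ℝ) (hP : IsPmf P) (hQpos : ∀ a, 0 < Q a) :
    hGen c P Q = klDiv P Q - (1 + c) * klDiv (mixPmf c P Q) Q :=
  klDiv_add_mul_klDiv_of_mix (fun a => (hQpos a).ne')
    (fun a => (mixPmf_pos hc (hP.1 a) (hQpos a)).ne')
    (one_add_mul_mixPmf (by linarith) P Q)

theorem stmt2 {X : Type*} [Fintype X] (c : ℝ) (hc : 0 < c)
    (P Q : X → ℝ) (hP : IsPmf P) (hQ : IsPmf Q) (hQpos : ∀ a, 0 < Q a) :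
    hGen c P Q = klDiv P Q - (1 + c) * klDiv (mixPmf c P Q) Q :=
  stmt2_general c hc P Q hP hQpos
end

section
/- Let N = cn with c > 0 fixed, and define the acceptance region Λ* = {(P,Q) ∈ 𝒫_n × 𝒫_N : h(P,Q) < λ − |𝒳|·log((n+1)(N+1))/n}, where h(P,Q) = D(P‖U) + (N/n)·D(Q‖U) and U = (n/(n+N))P + (N/(n+N))Q. Then for every pmf P_X on 𝒳, the probability that two independent i.i.d.-P_X sequences x^n, t^N have pair of types lying outside Λ* is at most 2^{−n(λ − ν_n)} with ν_n = 2|𝒳|·log((n+1)(N+1))/n; in particular this bound is uniform over all P_X. -/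
open Finset Filter Topology
open scoped Classical

/-! If `P_X` does not vanish on `x`, then `P_X^n(x) = 2^{-n D(P_x‖P_X)} · P_x^n(x)`. The
compensation identity `n D(P‖W) + N D(Q‖W) = n D(P‖U) + N D(Q‖U) + (n+N) D(U‖W)` for the mixture
`U`, which is the joint type of `x` and `t`, together with Gibbs' inequality `D(U‖P_X) ≥ 0`, bounds
the probability of a pair outside the acceptance region by `2^{-nλ + |𝒳| log((n+1)(N+1))}` times
`P_x^n(x) P_t^N(t)`. Summed over a type class, `P_x^n(x)` is at most `1`, and there are at most
`(n+1)^{|𝒳|}` type classes of length `n`. -/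

open Real

section Counting
variable {X : Type*} [DecidableEq X] {n N : ℕ}

def symbolCount (x : Fin n → X) (a : X) : ℕ :=
  #{i | x i = a}

lemma symbolCount_le (x : Fin n → X) (a : X) : symbolCount x a ≤ n := by
  simpa [symbolCount] using card_filter_le univ fun i => x i = a

lemma symbolCount_ne_zero_iff (x : Fin n → X) (a : X) : symbolCount x a ≠ 0 ↔ ∃ i, x i = a := by
  simp [symbolCount]

lemma symbolCount_append (x : Fin n → X) (t : Fin N → X) (a : X) :
    symbolCount (Fin.append x t) a = symbolCount x a + symbolCount t a := by
  simp only [symbolCount, card_filter, Fin.sum_univ_add, Fin.append_left, Fin.append_right]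

variable [Fintype X]

lemma sum_symbolCount (x : Fin n → X) : ∑ a, symbolCount x a = n := by
  simpa [symbolCount] using (card_eq_sum_card_fiberwise (f := x) (s := univ) (t := univ) (by simp)).symm

lemma sum_comp_eq_sum_symbolCount_mul (x : Fin n → X) (f : X → ℝ) :
    ∑ i, f (x i) = ∑ a, (symbolCount x a : ℝ) * f a := by
  rw [← sum_fiberwise_of_maps_to (fun i _ => mem_univ (x i)) (fun i => f (x i))]
  refine sum_congr rfl fun a _ => ?_
  rw [sum_congr rfl fun i hi => by rw [(mem_filter.1 hi).2], sum_const, nsmul_eq_mul]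
  rfl

lemma natCast_mul_empPmf (x : Fin n → X) (a : X) : (n : ℝ) * empPmf x a = symbolCount x a := by
  rcases Nat.eq_zero_or_pos n with rfl | hn
  · simp [empPmf, symbolCount]
  · rw [empPmf]
    field_simp
    rfl

lemma empPmf_nonneg (x : Fin n → X) (a : X) : 0 ≤ empPmf x a := by
  unfold empPmf; positivity

lemma empPmf_ne_zero_iff (x : Fin n → X) (a : X) : empPmf x a ≠ 0 ↔ ∃ i, x i = a := by
  rw [← symbolCount_ne_zero_iff]
  refine ⟨fun h hc => h ?_, fun h he => h ?_⟩
  · simp [empPmf, symbolCount, ← hc]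
  · have := natCast_mul_empPmf x a
    rw [he, mul_zero] at this
    exact_mod_cast this.symm

lemma empPmf_apply_self_pos (x : Fin n → X) (i : Fin n) : 0 < empPmf x (x i) :=
  (empPmf_nonneg x _).lt_of_ne' ((empPmf_ne_zero_iff x _).2 ⟨i, rfl⟩)

lemma sum_empPmf (hn : 0 < n) (x : Fin n → X) : ∑ a, empPmf x a = 1 := by
  have hn' : (n : ℝ) ≠ 0 := by positivity
  rw [← mul_right_inj' hn', mul_sum]
  simp only [natCast_mul_empPmf]
  exact_mod_cast (sum_symbolCount x).trans (mul_one n).symm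

lemma sum_empPmf_le_one (x : Fin n → X) : ∑ a, empPmf x a ≤ 1 := by
  rcases Nat.eq_zero_or_pos n with rfl | hn
  · simp [empPmf]
  · exact (sum_empPmf hn x).le

lemma empPmf_append (x : Fin n → X) (t : Fin N → X) (a : X) :
    ((n : ℝ) + N) * empPmf (Fin.append x t) a = n * empPmf x a + N * empPmf t a := by
  rw [← Nat.cast_add, natCast_mul_empPmf, natCast_mul_empPmf, natCast_mul_empPmf,
    symbolCount_append, Nat.cast_add]

end Counting

section Divergence
variable {X : Type*} [Fintype X]

lemma mul_logb_div_eq_mul_sub {b p w : ℝ} (hw : p ≠ 0 → w ≠ 0) :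
    p * logb b (p / w) = p * (logb b p - logb b w) := by
  rcases eq_or_ne p 0 with rfl | hp
  · simp
  · rw [logb_div hp (hw hp)]

lemma sub_div_log_le_mul_logb_div {u w : ℝ} (hu : 0 ≤ u) (hw : 0 ≤ w) (huw : u ≠ 0 → w ≠ 0) :
    (u - w) / log 2 ≤ u * logb 2 (u / w) := by
  rcases eq_or_ne u 0 with rfl | hu0
  · simpa [neg_div] using div_nonneg hw (log_nonneg one_le_two)
  have hw0 : 0 < w := hw.lt_of_ne' (huw hu0)
  have key : u / w - 1 ≤ u / w * log (u / w) := self_sub_one_le_mul_log (by positivity)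
  rw [logb, ← mul_div_assoc, div_le_div_iff_of_pos_right (log_pos one_lt_two)]
  calc u - w = w * (u / w - 1) := by field_simp
    _ ≤ w * (u / w * log (u / w)) := by gcongr
    _ = u * log (u / w) := by field_simp

theorem klDiv_nonneg {P W : X → ℝ} (hP : ∀ a, 0 ≤ P a) (hW : ∀ a, 0 ≤ W a)
    (hsum : ∑ a, W a ≤ ∑ a, P a) (hPW : ∀ a, P a ≠ 0 → W a ≠ 0) : 0 ≤ klDiv P W := by
  have hlog : 0 < log 2 := log_pos one_lt_two
  calc 0 ≤ (∑ a, P a - ∑ a, W a) / log 2 := div_nonneg (by linarith) hlog.le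
    _ = ∑ a, (P a - W a) / log 2 := by rw [← sum_sub_distrib, sum_div]
    _ ≤ klDiv P W := sum_le_sum fun a _ => sub_div_log_le_mul_logb_div (hP a) (hW a) (hPW a)

theorem klDiv_mixture {P Q U W : X → ℝ} {s t : ℝ} (hU : ∀ a, (s + t) * U a = s * P a + t * Q a)
    (hPU : ∀ a, P a ≠ 0 → U a ≠ 0) (hQU : ∀ a, Q a ≠ 0 → U a ≠ 0)
    (hUW : ∀ a, U a ≠ 0 → W a ≠ 0) :
    s * klDiv P W + t * klDiv Q W = s * klDiv P U + t * klDiv Q U + (s + t) * klDiv U W := by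
  simp only [klDiv, mul_sum, ← sum_add_distrib]
  refine sum_congr rfl fun a _ => ?_
  rw [mul_logb_div_eq_mul_sub (hUW a ∘ hPU a), mul_logb_div_eq_mul_sub (hUW a ∘ hQU a),
    mul_logb_div_eq_mul_sub (hPU a), mul_logb_div_eq_mul_sub (hQU a),
    mul_logb_div_eq_mul_sub (hUW a)]
  linear_combination (logb 2 (U a) - logb 2 (W a)) * (hU a).symm

theorem klDiv_mixture_le {P Q U W : X → ℝ} {s t : ℝ} (hst : 0 ≤ s + t)
    (hU : ∀ a, (s + t) * U a = s * P a + t * Q a)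
    (hPU : ∀ a, P a ≠ 0 → U a ≠ 0) (hQU : ∀ a, Q a ≠ 0 → U a ≠ 0)
    (hUnonneg : ∀ a, 0 ≤ U a) (hW : ∀ a, 0 ≤ W a) (hsum : ∑ a, W a ≤ ∑ a, U a)
    (hUW : ∀ a, U a ≠ 0 → W a ≠ 0) :
    s * klDiv P U + t * klDiv Q U ≤ s * klDiv P W + t * klDiv Q W := by
  rw [klDiv_mixture hU hPU hQU hUW]
  exact le_add_of_nonneg_right (mul_nonneg hst (klDiv_nonneg hUnonneg hW hsum hUW))

end Divergence

section Sequences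
variable {X : Type*} [Fintype X] [DecidableEq X] {n N : ℕ}

theorem prod_apply_eq_rpow_mul_prod_empPmf (x : Fin n → X) {W : X → ℝ}
    (hW : ∀ i, 0 < W (x i)) :
    ∏ i, W (x i) = (2 : ℝ) ^ (-(n * klDiv (empPmf x) W)) * ∏ i, empPmf x (x i) := by
  have hexp : -(n * klDiv (empPmf x) W) = ∑ i, logb 2 (W (x i) / empPmf x (x i)) := by
    rw [sum_comp_eq_sum_symbolCount_mul x fun a => logb 2 (W a / empPmf x a), klDiv, mul_sum,
      ← sum_neg_distrib]
    refine sum_congr rfl fun a _ => ?_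
    rw [← natCast_mul_empPmf, ← inv_div, logb_inv]
    ring
  rw [hexp, rpow_sum_of_pos two_pos, ← prod_mul_distrib]
  refine prod_congr rfl fun i _ => ?_
  have hP := empPmf_apply_self_pos x i
  rw [rpow_logb two_pos (by norm_num) (div_pos (hW i) hP), div_mul_cancel₀ _ hP.ne']

lemma prod_empPmf_nonneg (x : Fin n → X) : 0 ≤ ∏ i, empPmf x (x i) :=
  prod_nonneg fun _ _ => empPmf_nonneg x _

lemma empPmf_append_ne_zero_iff (x : Fin n → X) (t : Fin N → X) (a : X) :
    empPmf (Fin.append x t) a ≠ 0 ↔ (∃ i, x i = a) ∨ ∃ j, t j = a := by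
  rw [empPmf_ne_zero_iff]
  constructor
  · rintro ⟨k, rfl⟩
    induction k using Fin.addCases <;> simp
  · rintro (⟨i, rfl⟩ | ⟨j, rfl⟩)
    exacts [⟨Fin.castAdd N i, Fin.append_left x t i⟩, ⟨Fin.natAdd n j, Fin.append_right x t j⟩]

theorem prod_mul_prod_le_rpow_mul (hnN : 0 < n + N) {PX : X → ℝ} (hPX : IsPmf PX)
    (x : Fin n → X) (t : Fin N → X) :
    (∏ i, PX (x i)) * ∏ j, PX (t j) ≤
      (2 : ℝ) ^ (-(n * klDiv (empPmf x) (empPmf (Fin.append x t)) +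
          N * klDiv (empPmf t) (empPmf (Fin.append x t)))) *
        ((∏ i, empPmf x (x i)) * ∏ j, empPmf t (t j)) := by
  by_cases hpos : (∀ i, 0 < PX (x i)) ∧ ∀ j, 0 < PX (t j)
  · obtain ⟨hx, ht⟩ := hpos
    have hU := empPmf_append_ne_zero_iff x t
    have hmix := klDiv_mixture_le (W := PX) (by positivity) (empPmf_append x t)
      (fun a ha => hU a |>.2 <| .inl <| (empPmf_ne_zero_iff x a).1 ha)
      (fun a ha => hU a |>.2 <| .inr <| (empPmf_ne_zero_iff t a).1 ha)
      (empPmf_nonneg _) hPX.1 (by rw [hPX.2, sum_empPmf hnN])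
      (fun a ha => by
        obtain ⟨i, rfl⟩ | ⟨j, rfl⟩ := (hU a).1 ha
        exacts [(hx i).ne', (ht j).ne'])
    rw [prod_apply_eq_rpow_mul_prod_empPmf x hx, prod_apply_eq_rpow_mul_prod_empPmf t ht,
      mul_mul_mul_comm, ← rpow_add two_pos]
    gcongr
    · exact mul_nonneg (prod_empPmf_nonneg x) (prod_empPmf_nonneg t)
    · norm_num
    · linarith
  · have h0 : (∏ i, PX (x i)) * ∏ j, PX (t j) = 0 := by
      simp only [not_and_or, not_forall, not_lt] at hpos
      rcases hpos with ⟨i, hi⟩ | ⟨j, hj⟩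
      · rw [prod_eq_zero (mem_univ i) (hi.antisymm (hPX.1 _)), zero_mul]
      · rw [prod_eq_zero (mem_univ j) (hj.antisymm (hPX.1 _)), mul_zero]
    rw [h0]
    exact mul_nonneg (rpow_nonneg zero_le_two _)
      (mul_nonneg (prod_empPmf_nonneg x) (prod_empPmf_nonneg t))

theorem ite_not_lt_le_rpow_mul (hn : 0 < n) {PX : X → ℝ} (hPX : IsPmf PX) (r : ℝ)
    (x : Fin n → X) (t : Fin N → X) :
    (if ¬ (klDiv (empPmf x) (empPmf (Fin.append x t)) +
          ((N : ℝ) / n) * klDiv (empPmf t) (empPmf (Fin.append x t)) < r)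
      then (∏ i, PX (x i)) * (∏ j, PX (t j)) else 0) ≤
      (2 : ℝ) ^ (-(n * r)) * ((∏ i, empPmf x (x i)) * ∏ j, empPmf t (t j)) := by
  split_ifs with hr
  · exact mul_nonneg (rpow_nonneg zero_le_two _)
      (mul_nonneg (prod_empPmf_nonneg x) (prod_empPmf_nonneg t))
  refine (prod_mul_prod_le_rpow_mul (by omega) hPX x t).trans ?_
  gcongr
  · exact mul_nonneg (prod_empPmf_nonneg x) (prod_empPmf_nonneg t)
  · norm_num
  · have := mul_le_mul_of_nonneg_left (not_lt.1 hr) (Nat.cast_nonneg n)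
    rw [mul_add, ← mul_assoc, mul_div_cancel₀ _ (by positivity)] at this
    linarith

theorem card_image_empPmf_le :
    #(univ.image (empPmf : (Fin n → X) → X → ℝ)) ≤ (n + 1) ^ Fintype.card X := by
  let counts : (Fin n → X) → X → Fin (n + 1) :=
    fun x a => ⟨symbolCount x a, Nat.lt_succ_of_le (symbolCount_le x a)⟩
  have hcomp : (empPmf : (Fin n → X) → X → ℝ) = (fun c a => ((c a : ℕ) : ℝ) / n) ∘ counts := rfl
  calc #(univ.image (empPmf : (Fin n → X) → X → ℝ))
      = #((univ.image counts).image fun c a => ((c a : ℕ) : ℝ) / n) := by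
        rw [hcomp, image_image]
    _ ≤ #(univ.image counts) := card_image_le
    _ ≤ #(univ : Finset (X → Fin (n + 1))) := card_le_univ _
    _ = (n + 1) ^ Fintype.card X := by simp

theorem sum_prod_empPmf_le :
    ∑ x : Fin n → X, ∏ i, empPmf x (x i) ≤ ((n : ℝ) + 1) ^ Fintype.card X := by
  rw [← sum_fiberwise_of_maps_to (t := univ.image empPmf) fun x _ => mem_image_of_mem _ (mem_univ x)]
  calc _ ≤ ∑ _P ∈ univ.image empPmf, (1 : ℝ) := sum_le_sum fun P hP => ?_
    _ ≤ _ := by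
      rw [sum_const, nsmul_one]
      exact_mod_cast card_image_empPmf_le
  obtain ⟨x₀, -, rfl⟩ := mem_image.1 hP
  calc ∑ x with empPmf x = empPmf x₀, ∏ i, empPmf x (x i)
      = ∑ x with empPmf x = empPmf x₀, ∏ i, empPmf x₀ (x i) :=
        sum_congr rfl fun x hx => by rw [(mem_filter.1 hx).2]
    _ ≤ ∑ x : Fin n → X, ∏ i, empPmf x₀ (x i) :=
        sum_le_sum_of_subset_of_nonneg (filter_subset _ _) fun x _ _ =>
          prod_nonneg fun i _ => empPmf_nonneg _ _
    _ = (∑ a, empPmf x₀ a) ^ n := (Fintype.sum_pow _ _).symm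
    _ ≤ 1 := pow_le_one₀ (sum_nonneg fun a _ => empPmf_nonneg _ _) (sum_empPmf_le_one x₀)

end Sequences

theorem stmt9_general {X : Type*} [Fintype X] [DecidableEq X] {n N : ℕ} (hn : 0 < n)
    (lam : ℝ) (PX : X → ℝ) (hPX : IsPmf PX) :
    (∑ x : Fin n → X, ∑ t : Fin N → X,
        if ¬ (klDiv (empPmf x) (empPmf (Fin.append x t)) +
              ((N : ℝ) / n) * klDiv (empPmf t) (empPmf (Fin.append x t)) <
              lam - (Fintype.card X : ℝ) * Real.logb 2 (((n : ℝ) + 1) * ((N : ℝ) + 1)) / n)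
        then (∏ i, PX (x i)) * (∏ j, PX (t j)) else 0)
      ≤ (2 : ℝ) ^ (-(n : ℝ) *
          (lam - 2 * (Fintype.card X : ℝ) * Real.logb 2 (((n : ℝ) + 1) * ((N : ℝ) + 1)) / n)) := by
  set K := Fintype.card X
  set L := logb 2 (((n : ℝ) + 1) * ((N : ℝ) + 1))
  set r := lam - K * L / n
  calc _ ≤ ∑ x : Fin n → X, ∑ t : Fin N → X,
        (2 : ℝ) ^ (-(n * r)) * ((∏ i, empPmf x (x i)) * ∏ j, empPmf t (t j)) :=
        sum_le_sum fun x _ => sum_le_sum fun t _ => ite_not_lt_le_rpow_mul hn hPX r x t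
    _ = (2 : ℝ) ^ (-(n * r)) * ((∑ x : Fin n → X, ∏ i, empPmf x (x i)) *
          ∑ t : Fin N → X, ∏ j, empPmf t (t j)) := by
        rw [sum_mul_sum]
        simp only [mul_sum]
    _ ≤ (2 : ℝ) ^ (-(n * r)) * (((n : ℝ) + 1) ^ K * ((N : ℝ) + 1) ^ K) := by
        gcongr
        · exact sum_nonneg fun t _ => prod_empPmf_nonneg t
        · exact sum_prod_empPmf_le
        · exact sum_prod_empPmf_le
    _ = _ := by
        have h2L : ((n : ℝ) + 1) * ((N : ℝ) + 1) = 2 ^ L :=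
          (rpow_logb two_pos (by norm_num) (by positivity)).symm
        rw [← mul_pow, h2L, ← rpow_natCast, ← rpow_mul zero_le_two, ← rpow_add two_pos]
        congr 1
        simp only [r]
        field_simp
        ring

theorem stmt9 {X : Type*} [Fintype X] [DecidableEq X] {n N : ℕ} (hn : 0 < n) (hN : 0 < N)
    (lam : ℝ) (PX : X → ℝ) (hPX : IsPmf PX) :
    (∑ x : Fin n → X, ∑ t : Fin N → X,
        if ¬ (klDiv (empPmf x) (empPmf (Fin.append x t)) +
              ((N : ℝ) / n) * klDiv (empPmf t) (empPmf (Fin.append x t)) <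
              lam - (Fintype.card X : ℝ) * Real.logb 2 (((n : ℝ) + 1) * ((N : ℝ) + 1)) / n)
        then (∏ i, PX (x i)) * (∏ j, PX (t j)) else 0)
      ≤ (2 : ℝ) ^ (-(n : ℝ) *
          (lam - 2 * (Fintype.card X : ℝ) * Real.logb 2 (((n : ℝ) + 1) * ((N : ℝ) + 1)) / n)) :=
  stmt9_general hn lam PX hPX
end

section
/- Let Λ ⊆ 𝒫_n × 𝒫_N be any union of pairs of types such that max over all pmf's P_X of the probability P_X{(x^n, t^N) ∉ Λ} is at most 2^{−λn}, where x^n and t^N are independent i.i.d.-P_X sequences. Then the complement of Λ is contained in the complement of Λ* = {(P,Q) : h(P,Q) < λ − |𝒳|·log((n+1)(N+1))/n}; i.e., every pair of types excluded by Λ satisfies h(P,Q) ≥ λ − |𝒳|·log((n+1)(N+1))/n. -/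
open Finset Filter Topology
open scoped Classical

/-!
Let `U` be the empirical distribution of the concatenation of `x` and `t`, which is the mixture
of their types. By the invariance of `Λ`, every pair in the product of the type classes of `x`
and `t` lies outside `Λ`, so the hypothesis at `P_X = U` bounds the probability of that product
by `2 ^ (-λ n)`. Conversely, the `Q`-probability of the type class of a sequence of length `m`
with counts `k` is `|T| ∏ Q(a) ^ k a ≥ (m + 1) ^ (-|X|) 2 ^ (-m D(k / m ‖ Q))`. This amounts
to `m ^ m ≤ (m + 1) ^ |X| |T| ∏ k a ^ k a`: the multinomial expansion of `m ^ m = (∑ k a) ^ m`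
has at most `(m + 1) ^ |X|` terms, the largest being the one indexed by `k`, and
`multinomial k ≤ |T|` by orbit–stabilizer for permutations of the positions.
Taking logarithms of both bounds gives the inequality.
-/

open scoped Nat

theorem Nat.factorial_mul_pow_le_factorial_mul_pow (k l : ℕ) : k ! * k ^ l ≤ l ! * k ^ k := by
  rcases le_total k l with h | h
  · obtain ⟨j, rfl⟩ := Nat.exists_eq_add_of_le h
    calc k ! * k ^ (k + j) = k ! * k ^ j * k ^ k := by ring
      _ ≤ k ! * (k + 1) ^ j * k ^ k := by gcongr; exact k.le_succ
      _ ≤ (k + j)! * k ^ k := by gcongr; exact Nat.factorial_mul_pow_le_factorial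
  · obtain ⟨j, rfl⟩ := Nat.exists_eq_add_of_le h
    calc (l + j)! * (l + j) ^ l = l ! * (l + j).descFactorial j * (l + j) ^ l := by
          rw [← Nat.factorial_mul_descFactorial (Nat.le_add_left j l), Nat.add_sub_cancel]
      _ ≤ l ! * (l + j) ^ j * (l + j) ^ l := by gcongr; exact Nat.descFactorial_le_pow _ _
      _ = l ! * (l + j) ^ (l + j) := by ring

theorem Nat.multinomial_mul_prod_pow_le {ι : Type*} (s : Finset ι) {k l : ι → ℕ}
    (h : ∑ i ∈ s, l i = ∑ i ∈ s, k i) :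
    multinomial s l * ∏ i ∈ s, k i ^ l i ≤ multinomial s k * ∏ i ∈ s, k i ^ k i := by
  have hfac : 0 < (∏ i ∈ s, (l i)!) * ∏ i ∈ s, (k i)! := by positivity
  refine Nat.le_of_mul_le_mul_left ?_ hfac
  calc (∏ i ∈ s, (l i)!) * (∏ i ∈ s, (k i)!) * (multinomial s l * ∏ i ∈ s, k i ^ l i)
      = (∏ i ∈ s, (l i)!) * multinomial s l * ∏ i ∈ s, ((k i)! * k i ^ l i) := by
        rw [prod_mul_distrib]; ring
    _ ≤ (∏ i ∈ s, (l i)!) * multinomial s l * ∏ i ∈ s, ((l i)! * k i ^ k i) :=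
        Nat.mul_le_mul_left _ <|
          prod_le_prod' fun _ _ ↦ factorial_mul_pow_le_factorial_mul_pow _ _
    _ = (∏ i ∈ s, (l i)!) * (∏ i ∈ s, (k i)!) *
          (multinomial s k * ∏ i ∈ s, k i ^ k i) := by
        rw [prod_mul_distrib, multinomial_spec, h, ← multinomial_spec s k]; ring

theorem Finset.card_piAntidiag_univ_le {ι : Type*} [Fintype ι] [DecidableEq ι] (n : ℕ) :
    #(piAntidiag (univ : Finset ι) n) ≤ (n + 1) ^ Fintype.card ι := by
  calc #(piAntidiag univ n) ≤ #(Fintype.piFinset fun _ : ι ↦ range (n + 1)) := by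
        refine card_le_card fun f hf ↦ ?_
        rw [mem_piAntidiag] at hf
        simp only [Fintype.mem_piFinset, mem_range, Nat.lt_succ_iff]
        exact fun i ↦ hf.1 ▸ single_le_sum (fun _ _ ↦ Nat.zero_le _) (mem_univ i)
    _ = (n + 1) ^ Fintype.card ι := by simp

theorem Nat.pow_self_le_mul_multinomial_mul_prod_pow {ι : Type*} [Fintype ι] [DecidableEq ι]
    {k : ι → ℕ} {n : ℕ} (hk : ∑ i, k i = n) :
    n ^ n ≤ (n + 1) ^ Fintype.card ι * (multinomial univ k * ∏ i, k i ^ k i) := by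
  calc n ^ n = ∑ l ∈ piAntidiag univ n, multinomial univ l * ∏ i, k i ^ l i := by
        simpa only [hk, Nat.cast_id] using sum_pow_eq_sum_piAntidiag univ k n
    _ ≤ #(piAntidiag univ n) • (multinomial univ k * ∏ i, k i ^ k i) := by
        refine sum_le_card_nsmul _ _ _ fun l hl ↦ multinomial_mul_prod_pow_le _ ?_
        rw [(mem_piAntidiag.mp hl).1, hk]
    _ ≤ (n + 1) ^ Fintype.card ι * (multinomial univ k * ∏ i, k i ^ k i) := by
        rw [smul_eq_mul]; gcongr; exact card_piAntidiag_univ_le n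

section Counting

variable {X : Type*} [DecidableEq X] {m : ℕ}

def seqCount (x : Fin m → X) (a : X) : ℕ := #{i | x i = a}

theorem seqCount_le (x : Fin m → X) (a : X) : seqCount x a ≤ m :=
  (card_filter_le _ _).trans_eq (card_fin m)

theorem seqCount_comp_perm (x : Fin m → X) (σ : Equiv.Perm (Fin m)) :
    seqCount (x ∘ σ) = seqCount x :=
  funext fun _ ↦ card_equiv σ fun _ ↦ by simp

theorem seqCount_append {n N : ℕ} (x : Fin n → X) (t : Fin N → X) (a : X) :
    seqCount (Fin.append x t) a = seqCount x a + seqCount t a := by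
  simp only [seqCount, card_filter, Fin.sum_univ_add, Fin.append_left, Fin.append_right]

theorem pow_seqCount_pos (x : Fin m → X) {Q : X → ℝ}
    (hQ : ∀ a, seqCount x a ≠ 0 → 0 < Q a) (a : X) : 0 < Q a ^ seqCount x a := by
  rcases eq_or_ne (seqCount x a) 0 with h | h
  · simp [h]
  · exact pow_pos (hQ a h) _

end Counting

section TypeClass

variable {X : Type*} [Fintype X] [DecidableEq X] {m : ℕ}

def typeClass (x : Fin m → X) : Finset (Fin m → X) := {y | seqCount y = seqCount x}

theorem sum_seqCount (x : Fin m → X) : ∑ a, seqCount x a = m := by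
  simp only [seqCount, ← card_eq_sum_card_fiberwise (fun i _ ↦ mem_univ (x i)), card_univ,
    Fintype.card_fin]

theorem empPmf_apply (x : Fin m → X) (a : X) : empPmf x a = seqCount x a / m := rfl

theorem isPmf_empPmf (hm : 0 < m) (x : Fin m → X) : IsPmf (empPmf x) := by
  refine ⟨fun a ↦ by rw [empPmf_apply]; positivity, ?_⟩
  have hm' : (m : ℝ) ≠ 0 := by exact_mod_cast hm.ne'
  simp_rw [empPmf_apply, ← sum_div]
  rw [← Nat.cast_sum, sum_seqCount, div_self hm']

theorem empPmf_pos {x : Fin m → X} {a : X} (h : seqCount x a ≠ 0) : 0 < empPmf x a := by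
  rw [empPmf_apply]
  have := (Nat.pos_of_ne_zero h).trans_le (seqCount_le x a)
  positivity

theorem empPmf_eq_of_mem_typeClass {x y : Fin m → X} (hy : y ∈ typeClass x) :
    empPmf y = empPmf x :=
  funext fun a ↦ by rw [empPmf_apply, empPmf_apply, (mem_filter.1 hy).2]

theorem card_typeClass_pos (x : Fin m → X) : 0 < #(typeClass x) :=
  card_pos.2 ⟨x, by simp [typeClass]⟩

theorem multinomial_seqCount_le_card_typeClass (x : Fin m → X) :
    Nat.multinomial univ (seqCount x) ≤ #(typeClass x) := by
  let G := (Equiv.Perm (Fin m))ᵈᵐᵃ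
  have hstab : Nat.card (MulAction.stabilizer G x) = ∏ a, (seqCount x a)! := by
    let e : MulAction.stabilizer G x ≃ {σ : Equiv.Perm (Fin m) // x ∘ σ = x} :=
      Equiv.subtypeEquiv DomMulAct.mk.symm fun _ ↦ DomMulAct.mem_stabilizer_iff
    rw [Nat.card_congr e, Nat.card_eq_fintype_card, DomMulAct.stabilizer_card]
    simp [seqCount, Fintype.card_subtype]
  have horbit : MulAction.orbit G x ⊆ typeClass x := by
    rintro _ ⟨g, rfl⟩
    simp only [typeClass, coe_filter, mem_univ, true_and, Set.mem_ofPred_eq]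
    exact seqCount_comp_perm x (DomMulAct.mk.symm g)
  have hcard : Nat.card G = m ! := by
    rw [Nat.card_congr DomMulAct.mk.symm, Nat.card_perm, Nat.card_eq_fintype_card, Fintype.card_fin]
  have key : (∏ a, (seqCount x a)!) * Nat.multinomial univ (seqCount x) =
      (∏ a, (seqCount x a)!) * (MulAction.orbit G x).ncard := by
    rw [Nat.multinomial_spec, sum_seqCount, ← hstab, ← MulAction.index_stabilizer,
      Subgroup.card_mul_index, hcard]
  rw [Nat.eq_of_mul_eq_mul_left (by positivity) key, ← Set.ncard_coe_finset]
  exact Set.ncard_le_ncard horbit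

theorem pow_self_le_card_typeClass_mul (x : Fin m → X) :
    m ^ m ≤ (m + 1) ^ Fintype.card X * (#(typeClass x) * ∏ a, seqCount x a ^ seqCount x a) :=
  (Nat.pow_self_le_mul_multinomial_mul_prod_pow (sum_seqCount x)).trans <| by
    gcongr; exact multinomial_seqCount_le_card_typeClass x

theorem prod_apply_eq_prod_pow_seqCount {M : Type*} [CommMonoid M] (Q : X → M)
    (y : Fin m → X) : ∏ i, Q (y i) = ∏ a, Q a ^ seqCount y a := by
  simp only [← prod_fiberwise' univ y Q, prod_const, seqCount]

theorem sum_typeClass_prod_apply {R : Type*} [CommSemiring R] (Q : X → R) (x : Fin m → X) :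
    ∑ y ∈ typeClass x, ∏ i, Q (y i) = #(typeClass x) * ∏ a, Q a ^ seqCount x a := by
  rw [sum_congr rfl fun y hy ↦ by
      rw [prod_apply_eq_prod_pow_seqCount, (mem_filter.1 hy).2], sum_const, nsmul_eq_mul]

theorem sum_typeClass_prod_apply_pos (x : Fin m → X) {Q : X → ℝ}
    (hQ : ∀ a, seqCount x a ≠ 0 → 0 < Q a) : 0 < ∑ y ∈ typeClass x, ∏ i, Q (y i) := by
  rw [sum_typeClass_prod_apply]
  exact mul_pos (mod_cast card_typeClass_pos x) (prod_pos fun a _ ↦ pow_seqCount_pos x hQ a)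

theorem mul_klDiv_empPmf (x : Fin m → X) {Q : X → ℝ}
    (hQ : ∀ a, seqCount x a ≠ 0 → 0 < Q a) :
    m * klDiv (empPmf x) Q = ∑ a, seqCount x a * Real.logb 2 (seqCount x a)
      - m * Real.logb 2 m - ∑ a, seqCount x a * Real.logb 2 (Q a) := by
  have hterm : ∀ a, (m : ℝ) * (empPmf x a * Real.logb 2 (empPmf x a / Q a)) =
      seqCount x a * Real.logb 2 (seqCount x a) - seqCount x a * Real.logb 2 m
        - seqCount x a * Real.logb 2 (Q a) := by
    intro a
    rw [empPmf_apply]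
    rcases eq_or_ne (seqCount x a) 0 with h | h
    · simp [h]
    have hm : (m : ℝ) ≠ 0 := by
      exact_mod_cast ((Nat.pos_of_ne_zero h).trans_le (seqCount_le x a)).ne'
    have hk : (seqCount x a : ℝ) ≠ 0 := by exact_mod_cast h
    rw [Real.logb_div (div_ne_zero hk hm) (hQ a h).ne', Real.logb_div hk hm]
    field_simp
  have hsum : ∑ a, (seqCount x a : ℝ) = m := by exact_mod_cast sum_seqCount x
  rw [klDiv, mul_sum, sum_congr rfl fun a _ ↦ hterm a, sum_sub_distrib, sum_sub_distrib,
    ← sum_mul, hsum]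

theorem neg_mul_klDiv_sub_le_logb_sum_typeClass (x : Fin m → X) {Q : X → ℝ}
    (hQ : ∀ a, seqCount x a ≠ 0 → 0 < Q a) :
    -(m * klDiv (empPmf x) Q) - Fintype.card X * Real.logb 2 (m + 1) ≤
      Real.logb 2 (∑ y ∈ typeClass x, ∏ i, Q (y i)) := by
  have hT : (0 : ℝ) < #(typeClass x) := mod_cast card_typeClass_pos x
  have hk : ∀ a, (0 : ℝ) < (seqCount x a : ℝ) ^ seqCount x a :=
    pow_seqCount_pos x fun a h ↦ by exact_mod_cast Nat.pos_of_ne_zero h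
  have hQk : ∀ a, 0 < Q a ^ seqCount x a := pow_seqCount_pos x hQ
  have hmm : (0 : ℝ) < m ^ m := by
    rcases m.eq_zero_or_pos with rfl | hm
    · simp
    · positivity
  have hcount : m * Real.logb 2 m ≤ Fintype.card X * Real.logb 2 (m + 1) +
      (Real.logb 2 #(typeClass x) + ∑ a, seqCount x a * Real.logb 2 (seqCount x a)) := by
    have h := Nat.cast_le (α := ℝ) |>.2 (pow_self_le_card_typeClass_mul x)
    push_cast at h
    replace h := Real.logb_le_logb_of_le (b := 2) one_lt_two hmm h
    rw [Real.logb_mul (by positivity) (mul_pos hT (prod_pos fun a _ ↦ hk a)).ne',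
      Real.logb_mul hT.ne' (prod_pos fun a _ ↦ hk a).ne',
      Real.logb_prod _ _ fun a _ ↦ (hk a).ne'] at h
    simpa only [Real.logb_pow] using h
  rw [mul_klDiv_empPmf x hQ, sum_typeClass_prod_apply,
    Real.logb_mul hT.ne' (prod_pos fun a _ ↦ hQk a).ne',
    Real.logb_prod _ _ fun a _ ↦ (hQk a).ne']
  simp only [Real.logb_pow]
  linarith

end TypeClass

theorem sum_typeClass_mul_sum_typeClass_le {X : Type*} [Fintype X] [DecidableEq X] {n N : ℕ}
    {Λ : (Fin n → X) → (Fin N → X) → Prop}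
    (hinv : ∀ x x' t t', empPmf x = empPmf x' → empPmf t = empPmf t' → (Λ x t ↔ Λ x' t'))
    {x : Fin n → X} {t : Fin N → X} (hxt : ¬ Λ x t) {Q : X → ℝ} (hQ : ∀ a, 0 ≤ Q a) :
    (∑ y ∈ typeClass x, ∏ i, Q (y i)) * (∑ s ∈ typeClass t, ∏ j, Q (s j)) ≤
      ∑ y : Fin n → X, ∑ s : Fin N → X,
        if ¬ Λ y s then (∏ i, Q (y i)) * (∏ j, Q (s j)) else 0 := by
  have hF : ∀ y s, (0 : ℝ) ≤ if ¬ Λ y s then (∏ i, Q (y i)) * (∏ j, Q (s j)) else 0 :=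
    fun _ _ ↦ ite_nonneg
      (mul_nonneg (prod_nonneg fun _ _ ↦ hQ _) (prod_nonneg fun _ _ ↦ hQ _)) le_rfl
  rw [sum_mul_sum]
  calc ∑ y ∈ typeClass x, ∑ s ∈ typeClass t, (∏ i, Q (y i)) * (∏ j, Q (s j))
      = ∑ y ∈ typeClass x, ∑ s ∈ typeClass t,
          if ¬ Λ y s then (∏ i, Q (y i)) * (∏ j, Q (s j)) else 0 :=
        sum_congr rfl fun y hy ↦ sum_congr rfl fun s hs ↦ (if_pos <| by
          rwa [hinv y x s t (empPmf_eq_of_mem_typeClass hy) (empPmf_eq_of_mem_typeClass hs)]).symm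
    _ ≤ ∑ y ∈ typeClass x, ∑ s : Fin N → X,
          if ¬ Λ y s then (∏ i, Q (y i)) * (∏ j, Q (s j)) else 0 :=
        sum_le_sum fun y _ ↦ sum_le_sum_of_subset_of_nonneg (subset_univ _) fun s _ _ ↦ hF y s
    _ ≤ _ := sum_le_sum_of_subset_of_nonneg (subset_univ _) fun y _ _ ↦
        sum_nonneg fun s _ ↦ hF y s

theorem stmt10_general {X : Type*} [Fintype X] [DecidableEq X] {n N : ℕ} (hn : 0 < n)
    (lam : ℝ) (Λ : (Fin n → X) → (Fin N → X) → Prop)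
    (hinv : ∀ x x' t t', empPmf x = empPmf x' → empPmf t = empPmf t' → (Λ x t ↔ Λ x' t'))
    (hfp : ∀ PX : X → ℝ, IsPmf PX →
      (∑ x : Fin n → X, ∑ t : Fin N → X,
          if ¬ Λ x t then (∏ i, PX (x i)) * (∏ j, PX (t j)) else 0)
        ≤ (2 : ℝ) ^ (-(lam * n))) :
    ∀ x t, ¬ Λ x t →
      klDiv (empPmf x) (empPmf (Fin.append x t)) +
          ((N : ℝ) / n) * klDiv (empPmf t) (empPmf (Fin.append x t)) ≥
        lam - (Fintype.card X : ℝ) * Real.logb 2 (((n : ℝ) + 1) * ((N : ℝ) + 1)) / n := by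
  intro x t hxt
  set U := empPmf (Fin.append x t)
  have hUx : ∀ a, seqCount x a ≠ 0 → 0 < U a := fun a h ↦
    empPmf_pos (by rw [seqCount_append]; omega)
  have hUt : ∀ a, seqCount t a ≠ 0 → 0 < U a := fun a h ↦
    empPmf_pos (by rw [seqCount_append]; omega)
  have hpair : Real.logb 2 (∑ y ∈ typeClass x, ∏ i, U (y i)) +
      Real.logb 2 (∑ s ∈ typeClass t, ∏ j, U (s j)) ≤ -(lam * n) := by
    rw [← Real.logb_mul (sum_typeClass_prod_apply_pos x hUx).ne'
      (sum_typeClass_prod_apply_pos t hUt).ne',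
      ← Real.logb_rpow (b := 2) (x := -(lam * n)) two_pos (by norm_num)]
    refine Real.logb_le_logb_of_le one_lt_two
      (mul_pos (sum_typeClass_prod_apply_pos x hUx) (sum_typeClass_prod_apply_pos t hUt)) ?_
    have hU := isPmf_empPmf (by omega) (Fin.append x t)
    exact (sum_typeClass_mul_sum_typeClass_le hinv hxt hU.1).trans (hfp U hU)
  have hx := neg_mul_klDiv_sub_le_logb_sum_typeClass x hUx
  have ht := neg_mul_klDiv_sub_le_logb_sum_typeClass t hUt
  rw [Real.logb_mul (by positivity) (by positivity)]
  have hn' : (0 : ℝ) < n := by exact_mod_cast hn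
  calc lam - (Fintype.card X : ℝ) * (Real.logb 2 (n + 1) + Real.logb 2 (N + 1)) / n
      = (lam * n - Fintype.card X * (Real.logb 2 (n + 1) + Real.logb 2 (N + 1))) / n := by
        field_simp
    _ ≤ (n * klDiv (empPmf x) U + N * klDiv (empPmf t) U) / n := by gcongr; linarith
    _ = klDiv (empPmf x) U + N / n * klDiv (empPmf t) U := by field_simp

theorem stmt10 {X : Type*} [Fintype X] [DecidableEq X] {n N : ℕ} (hn : 0 < n) (hN : 0 < N)
    (lam : ℝ) (Λ : (Fin n → X) → (Fin N → X) → Prop)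
    (hinv : ∀ x x' t t', empPmf x = empPmf x' → empPmf t = empPmf t' → (Λ x t ↔ Λ x' t'))
    (hfp : ∀ PX : X → ℝ, IsPmf PX →
      (∑ x : Fin n → X, ∑ t : Fin N → X,
          if ¬ Λ x t then (∏ i, PX (x i)) * (∏ j, PX (t j)) else 0)
        ≤ (2 : ℝ) ^ (-(lam * n))) :
    ∀ x t, ¬ Λ x t →
      klDiv (empPmf x) (empPmf (Fin.append x t)) +
          ((N : ℝ) / n) * klDiv (empPmf t) (empPmf (Fin.append x t)) ≥
        lam - (Fintype.card X : ℝ) * Real.logb 2 (((n : ℝ) + 1) * ((N : ℝ) + 1)) / n :=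
  stmt10_general hn lam Λ hinv hfp
end

section
/- Let N(n)/n → ∞ as n → ∞, and fix pmf's P, Q on 𝒳 with Q(a) > 0 for all a. Let U_n = (n/(n+N(n)))·P + (N(n)/(n+N(n)))·Q. Then (N(n)/n)·D(Q‖U_n) → 0 and D(P‖U_n) → D(P‖Q) as n → ∞; hence h(P,Q) = D(P‖U_n) + (N(n)/n)·D(Q‖U_n) converges to D(P‖Q). -/
open Finset Filter Topology
open scoped Classical

/-! With `t = (1 + c)⁻¹` the mixture `mixPmf c P Q` is the point `t P + (1 - t) Q` of the
segment from `Q` to `P`, and `c = (1 - t) / t`; here `c = N(n)/n → ∞`, so `t → 0⁺`. As `Q > 0`,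
`D(P‖·)` is continuous at `Q`, which gives the limit of `D(P‖mixPmf c P Q)`. The function
`g t = D(Q‖t P + (1 - t) Q)` vanishes at `0` with derivative `(∑ Q - ∑ P) / log 2 = 0` there,
so `c g(t) = (1 - t) (g(t) / t) → 0`. -/

section

variable {X : Type*}

theorem mixPmf_eq_segment {c : ℝ} (hc : 1 + c ≠ 0) (P Q : X → ℝ) :
    mixPmf c P Q = fun a => (1 + c)⁻¹ * P a + (1 - (1 + c)⁻¹) * Q a := by
  funext a
  simp only [mixPmf]
  field_simp
  ring

theorem mixPmf_div {x y : ℝ} (hx : 0 < x) (hy : 0 ≤ y) (P Q : X → ℝ) :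
    mixPmf (y / x) P Q = fun a => x / (x + y) * P a + y / (x + y) * Q a := by
  funext a
  simp only [mixPmf]
  have : x + y ≠ 0 := by positivity
  field_simp

theorem tendsto_inv_one_add_atTop :
    Tendsto (fun c : ℝ => (1 + c)⁻¹) atTop (𝓝[>] 0) :=
  tendsto_inv_atTop_nhdsGT_zero.comp (tendsto_atTop_add_const_left _ 1 tendsto_id)

theorem hasDerivAt_mul_logb_div_segment {p q : ℝ} (hq : 0 < q) :
    HasDerivAt (fun t : ℝ => q * Real.logb 2 (q / (t * p + (1 - t) * q)))
      ((q - p) / Real.log 2) 0 := by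
  have hu : HasDerivAt (fun t : ℝ => t * p + (1 - t) * q) (p - q) 0 := by
    refine (((hasDerivAt_id' (x := (0 : ℝ))).mul_const p).fun_add
      (((hasDerivAt_id' (x := (0 : ℝ))).const_sub 1).mul_const q)).congr_deriv ?_
    ring
  have hu0 : (0 : ℝ) * p + (1 - 0) * q = q := by ring
  have hdiv := (hasDerivAt_const (0 : ℝ) q).fun_div hu (by rw [hu0]; exact hq.ne')
  refine (((hdiv.log (by rw [hu0, div_self hq.ne']; exact one_ne_zero)).div_const
    (Real.log 2)).const_mul q).congr_deriv ?_
  rw [hu0]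
  field_simp
  ring

variable [Fintype X]

theorem klDiv_self (Q : X → ℝ) : klDiv Q Q = 0 := by
  refine Finset.sum_eq_zero fun a _ => ?_
  rcases eq_or_ne (Q a) 0 with h | h
  · simp [h]
  · simp [div_self h]

theorem continuousAt_klDiv_right (P : X → ℝ) {Q : X → ℝ} (hQ : ∀ a, 0 < Q a) :
    ContinuousAt (klDiv P) Q := by
  refine tendsto_finsetSum _ fun a _ => ?_
  rcases eq_or_ne (P a) 0 with h | h
  · simp only [h, zero_mul]
    exact continuousAt_const
  · exact continuousAt_const.mul <| (continuousAt_const.div (continuous_apply a).continuousAt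
      (hQ a).ne').logb (div_ne_zero h (hQ a).ne')

theorem hasDerivAt_klDiv_segment (P : X → ℝ) {Q : X → ℝ} (hQ : ∀ a, 0 < Q a) :
    HasDerivAt (fun t : ℝ => klDiv Q (fun a => t * P a + (1 - t) * Q a))
      ((∑ a, Q a - ∑ a, P a) / Real.log 2) 0 := by
  rw [← Finset.sum_sub_distrib, Finset.sum_div]
  exact HasDerivAt.fun_sum fun a _ => hasDerivAt_mul_logb_div_segment (hQ a)

theorem tendsto_klDiv_mixPmf_atTop (P : X → ℝ) {Q : X → ℝ} (hQ : ∀ a, 0 < Q a) :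
    Tendsto (fun c => klDiv P (mixPmf c P Q)) atTop (𝓝 (klDiv P Q)) := by
  have hline : ContinuousAt (fun t : ℝ => klDiv P (fun a => t * P a + (1 - t) * Q a)) 0 := by
    refine (continuousAt_klDiv_right P hQ).comp_of_eq (by fun_prop) ?_
    simp
  have h := hline.tendsto.comp (tendsto_inv_one_add_atTop.mono_right nhdsWithin_le_nhds)
  simp only [zero_mul, sub_zero, one_mul, zero_add] at h
  refine h.congr' ?_
  filter_upwards [eventually_gt_atTop 0] with c hc
  rw [Function.comp_apply, mixPmf_eq_segment (by positivity)]

theorem tendsto_mul_klDiv_mixPmf_atTop {P Q : X → ℝ} (hQ : ∀ a, 0 < Q a)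
    (hPQ : ∑ a, P a = ∑ a, Q a) :
    Tendsto (fun c => c * klDiv Q (mixPmf c P Q)) atTop (𝓝 0) := by
  set g := fun t : ℝ => klDiv Q (fun a => t * P a + (1 - t) * Q a)
  have hg0 : g 0 = 0 := by simpa [g] using klDiv_self Q
  have hslope : Tendsto (fun t => t⁻¹ * g t) (𝓝[≠] 0) (𝓝 0) := by
    have h : Tendsto (slope g 0) (𝓝[≠] 0) (𝓝 0) := by
      simpa [hPQ] using hasDerivAt_iff_tendsto_slope.mp (hasDerivAt_klDiv_segment P hQ)
    refine h.congr fun t => ?_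
    rw [slope_def_field, hg0, sub_zero, sub_zero, div_eq_inv_mul]
  have h := ((tendsto_const_nhds (x := (1 : ℝ)).sub
    (tendsto_nhdsWithin_of_tendsto_nhds tendsto_id)).mul hslope).comp
    (tendsto_inv_one_add_atTop.mono_right (nhdsGT_le_nhdsNE 0))
  simp only [mul_zero] at h
  refine h.congr' ?_
  filter_upwards [eventually_gt_atTop 0] with c hc
  rw [Function.comp_apply, mixPmf_eq_segment (by positivity)]
  simp only [g, id]
  field_simp
  ring

theorem tendsto_hGen_atTop {P Q : X → ℝ} (hQ : ∀ a, 0 < Q a) (hPQ : ∑ a, P a = ∑ a, Q a) :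
    Tendsto (fun c => hGen c P Q) atTop (𝓝 (klDiv P Q)) := by
  simpa only [hGen, add_zero] using
    (tendsto_klDiv_mixPmf_atTop P hQ).add (tendsto_mul_klDiv_mixPmf_atTop hQ hPQ)

end

theorem stmt12 {X : Type*} [Fintype X] (N : ℕ → ℕ)
    (hN : Tendsto (fun n : ℕ => (N n : ℝ) / n) atTop atTop)
    (P Q : X → ℝ) (hP : IsPmf P) (hQ : IsPmf Q) (hQpos : ∀ a, 0 < Q a) :
    Tendsto (fun n : ℕ => ((N n : ℝ) / n) *
        klDiv Q (fun a => ((n : ℝ) / ((n : ℝ) + N n)) * P a + ((N n : ℝ) / ((n : ℝ) + N n)) * Q a))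
      atTop (𝓝 0) ∧
    Tendsto (fun n : ℕ =>
        klDiv P (fun a => ((n : ℝ) / ((n : ℝ) + N n)) * P a + ((N n : ℝ) / ((n : ℝ) + N n)) * Q a))
      atTop (𝓝 (klDiv P Q)) ∧
    Tendsto (fun n : ℕ =>
        klDiv P (fun a => ((n : ℝ) / ((n : ℝ) + N n)) * P a + ((N n : ℝ) / ((n : ℝ) + N n)) * Q a) +
        ((N n : ℝ) / n) *
        klDiv Q (fun a => ((n : ℝ) / ((n : ℝ) + N n)) * P a + ((N n : ℝ) / ((n : ℝ) + N n)) * Q a))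
      atTop (𝓝 (klDiv P Q)) := by
  have hPQ : ∑ a, P a = ∑ a, Q a := hP.2.trans hQ.2.symm
  have hmix : ∀ᶠ n : ℕ in atTop, mixPmf ((N n : ℝ) / n) P Q =
      fun a => ((n : ℝ) / ((n : ℝ) + N n)) * P a + ((N n : ℝ) / ((n : ℝ) + N n)) * Q a := by
    filter_upwards [eventually_gt_atTop 0] with n hn
    exact mixPmf_div (Nat.cast_pos.mpr hn) (N n).cast_nonneg P Q
  refine ⟨((tendsto_mul_klDiv_mixPmf_atTop hQpos hPQ).comp hN).congr' ?_,
    ((tendsto_klDiv_mixPmf_atTop P hQpos).comp hN).congr' ?_,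
    ((tendsto_hGen_atTop hQpos hPQ).comp hN).congr' ?_⟩ <;>
  filter_upwards [hmix] with n hn <;>
  simp only [Function.comp_apply, hGen, hn]
end
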